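/- Let P and Q be finite-control cache algorithms with block-independent eviction. The leak ratios r_{P,Q}(l) and r_{Q,P}(l) are in Ω(l) if and only if the difference in misses between P and Q is unbounded: ∀m ∈ ℕ, ∃t ∈ B*, |P(t) − Q(t)| > m. -/

import Mathlib

structure CacheAlg (B : Type) where
  S : Type
  init : S
  n : ℕ
  tr : S → Fin n → S
  evict : S → B → S × Fin n

variable {B : Type} [DecidableEq B]

abbrev CacheAlg.Config (P : CacheAlg B) := P.S × (Fin P.n → Option B)

noncomputable def CacheAlg.upd (P : CacheAlg B) (g : P.Config) (b : B) : P.Config :=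
  if h : ∃ j, g.2 j = some b then (P.tr g.1 h.choose, g.2)
  else ((P.evict g.1 b).1, Function.update g.2 (P.evict g.1 b).2 (some b))

noncomputable def CacheAlg.updTrace (P : CacheAlg B) (g : P.Config) : List B → P.Config
  | [] => g
  | b :: t => P.updTrace (P.upd g b) t

noncomputable def CacheAlg.missesFrom (P : CacheAlg B) (g : P.Config) : List B → ℕ
  | [] => 0
  | b :: t => (if ∃ j, g.2 j = some b then 0 else 1) + P.missesFrom (P.upd g b) t

def CacheAlg.initConfig (P : CacheAlg B) : P.Config := (P.init, fun _ => none)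

/-- Number of misses of `P` on trace `t` from the empty initial configuration. -/
noncomputable def CacheAlg.misses (P : CacheAlg B) (t : List B) : ℕ := P.missesFrom P.initConfig t

/-- The leak ratio `r_{P,Q}(l)`: supremum over sets `T` of traces of length `l`
of `|P(T)| / |Q(T)|`. -/
noncomputable def leakRatio (P Q : CacheAlg B) (l : ℕ) : ℝ :=
  sSup {r : ℝ | ∃ T : Finset (List B), T.Nonempty ∧ (∀ t ∈ T, t.length = l) ∧
    r = ((T.image P.misses).card : ℝ) / ((T.image Q.misses).card : ℝ)}

/-- Lifting of a bijection on blocks to cache contents, mapping `⊥` to `⊥`. -/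
def renameContent (π : B ≃ B) {n : ℕ} (c : Fin n → Option B) : Fin n → Option B :=
  fun j => (c j).map π

/-- Lifting of a bijection on blocks to cache configurations. -/
def CacheAlg.renameConfig (P : CacheAlg B) (π : B ≃ B) (g : P.Config) : P.Config :=
  (g.1, renameContent π g.2)

/-- The eviction function is independent of the accessed block. -/
def CacheAlg.EvictBlockIndep (P : CacheAlg B) : Prop :=
  ∀ (s : P.S) (b b' : B), P.evict s b = P.evict s b'

/-- Congruence of pairs of cache configurations via a simultaneous renaming. -/
def CacheAlg.Congruent (P Q : CacheAlg B) (x y : P.Config × Q.Config) : Prop :=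
  ∃ π : B ≃ B, P.renameConfig π x.1 = y.1 ∧ Q.renameConfig π x.2 = y.2

/-!
Block-independent eviction makes the dynamics of a cache equivariant under renamings of blocks,
and a pair of configurations is determined up to simultaneous renaming by finitely much data: the
control states and the equality pattern of the contents. The miss difference along the prefixes
of a trace moves by at most one per access, so if it ends above the number of patterns, two
prefixes with congruent configurations have different differences. The segment between them is a
cycle, repeatable up to renaming, on which `P` and `Q` miss differently. Repeating it a varying
number of times and compensating with fresh blocks gives `K + 1` traces of length `l`, with `K`
linear in `l`, on which `Q` misses equally often and `P` always differently; hence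
`r_{P,Q}(l) ≥ K + 1`. Conversely, if `|P(t) - Q(t)| ≤ m` for all `t`, each miss count of `Q`
allows at most `2m + 1` miss counts of `P`, so `r_{P,Q} ≤ 2m + 1`.
-/

theorem exists_equiv_apply_eq_of_ker_eq {ι β : Type*} [Finite ι] [Infinite β] {c c' : ι → β}
    (hker : ∀ i j, c i = c j ↔ c' i = c' j) : ∃ σ : β ≃ β, ∀ i, σ (c i) = c' i := by
  let f : Set.range c → β := fun x => c' x.2.choose
  have hf : ∀ i, f ⟨c i, i, rfl⟩ = c' i := fun i =>
    (hker _ i).1 (Exists.choose_spec (⟨i, rfl⟩ : ∃ j, c j = c i))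
  have hinj : Function.Injective f := by
    rintro ⟨_, i, rfl⟩ ⟨_, j, rfl⟩ hij
    rw [hf, hf] at hij
    exact Subtype.ext ((hker i j).2 hij)
  have hlt : Cardinal.mk (Set.range c) < Cardinal.mk β :=
    (Set.finite_range c).lt_aleph0.trans_le (Cardinal.aleph0_le_mk β)
  obtain ⟨σ, hσ⟩ := Cardinal.extend_function_of_lt ⟨f, hinj⟩ hlt ⟨Equiv.refl β⟩
  exact ⟨σ, fun i => (hσ ⟨c i, i, rfl⟩).trans (hf i)⟩

theorem exists_equiv_map_eq_of_ker_eq {ι β : Type*} [Finite ι] [Infinite β]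
    {c c' : ι → Option β} (hker : ∀ i j, c i = c j ↔ c' i = c' j)
    (hnone : ∀ i, c i = none ↔ c' i = none) : ∃ π : β ≃ β, ∀ i, (c i).map π = c' i := by
  -- adjoin an index carrying `none`, so that the equivalence fixes `none`
  obtain ⟨σ, hσ⟩ := exists_equiv_apply_eq_of_ker_eq (c := fun i : Option ι => i.elim none c)
    (c' := fun i => i.elim none c') (by rintro (_ | i) (_ | j) <;> simp [hker, hnone, eq_comm])
  have hσnone : σ none = none := hσ none
  refine ⟨σ.removeNone, fun i => ?_⟩
  rw [← show σ (c i) = c' i from hσ (some i)]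
  rcases c i with _ | b
  · exact hσnone.symm
  · obtain ⟨b', hb'⟩ := Option.ne_none_iff_exists'.1
      (fun h => Option.some_ne_none b (σ.injective (h.trans hσnone.symm)))
    exact Equiv.removeNone_some σ ⟨b', hb'⟩

theorem natAbs_lt_card_image_range {f : ℕ → ℤ} (h0 : f 0 = 0)
    (hstep : ∀ k, |f (k + 1) - f k| ≤ 1) (n : ℕ) :
    (f n).natAbs < ((Finset.range (n + 1)).image f).card := by
  -- discrete intermediate value theorem
  have hmem : ∀ k z, (0 ≤ z ∧ z ≤ f k ∨ f k ≤ z ∧ z ≤ 0) → z ∈ (Finset.range (k + 1)).image f := by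
    intro k
    induction k with
    | zero => intro z hz; exact Finset.mem_image.2 ⟨0, by simp, by omega⟩
    | succ k ih =>
      intro z hz
      by_cases hzn : 0 ≤ z ∧ z ≤ f k ∨ f k ≤ z ∧ z ≤ 0
      · exact Finset.image_subset_image (Finset.range_subset_range.2 (Nat.le_succ _)) (ih z hzn)
      · have := abs_le.1 (hstep k)
        exact Finset.mem_image.2 ⟨k + 1, Finset.self_mem_range_succ _, by omega⟩
  calc (f n).natAbs < (Finset.Icc (min 0 (f n)) (max 0 (f n))).card := by
        rw [Int.card_Icc]; omega
    _ ≤ _ := Finset.card_le_card fun z hz => hmem n z (by rw [Finset.mem_Icc] at hz; omega)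

theorem exists_lt_eq_ne_of_card_le_natAbs {γ : Type*} [Finite γ] {f : ℕ → ℤ} (g : ℕ → γ)
    (h0 : f 0 = 0) (hstep : ∀ k, |f (k + 1) - f k| ≤ 1) {n : ℕ} (hn : Nat.card γ ≤ (f n).natAbs) :
    ∃ i j, i < j ∧ j ≤ n ∧ g i = g j ∧ f i ≠ f j := by
  classical
  by_contra! hfg
  have := Fintype.ofFinite γ
  have hcard : ((Finset.range (n + 1)).image f).card ≤ ((Finset.range (n + 1)).image g).card := by
    refine Finset.card_le_card_of_forall_subsingleton
      (fun z x => ∃ k ∈ Finset.range (n + 1), f k = z ∧ g k = x) ?_ ?_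
    · intro z hz
      obtain ⟨k, hk, rfl⟩ := Finset.mem_image.1 hz
      exact ⟨g k, Finset.mem_image_of_mem g hk, k, hk, rfl, rfl⟩
    · rintro x - _ ⟨-, i, hi, rfl, rfl⟩ _ ⟨-, j, hj, rfl, hji⟩
      rw [Finset.mem_range] at hi hj
      rcases lt_trichotomy i j with hij | rfl | hij
      · exact hfg i j hij (by omega) hji.symm
      · rfl
      · exact (hfg j i hij (by omega) hji).symm
  have := natAbs_lt_card_image_range h0 hstep n
  have := Finset.card_le_univ ((Finset.range (n + 1)).image g)
  rw [Nat.card_eq_fintype_card] at hn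
  omega

theorem card_image_le_card_image_mul {α : Type*} {T : Finset α} {f g : α → ℕ} {m : ℕ}
    (h : ∀ a ∈ T, |(f a : ℤ) - g a| ≤ m) :
    (T.image f).card ≤ (T.image g).card * (2 * m + 1) := by
  have hsub : T.image f ⊆ (T.image g).biUnion fun y => Finset.Icc (y - m) (y + m) := by
    intro x hx
    obtain ⟨a, ha, rfl⟩ := Finset.mem_image.1 hx
    have := abs_le.1 (h a ha)
    exact Finset.mem_biUnion.2 ⟨g a, Finset.mem_image_of_mem g ha, Finset.mem_Icc.2 (by omega)⟩
  refine (Finset.card_le_card hsub).trans (Finset.card_biUnion_le_card_mul _ _ _ fun y _ => ?_)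
  rw [Nat.card_Icc]
  omega

theorem not_natCast_isBigO_of_abs_le {f : ℕ → ℝ} {C : ℝ} (hf : ∀ l, |f l| ≤ C) :
    ¬ (fun l : ℕ => (l : ℝ)) =O[Filter.atTop] f := by
  intro hO
  obtain ⟨c, hc, hbound⟩ := hO.exists_pos
  obtain ⟨l, hl, hlarge⟩ := (hbound.bound.and
    (tendsto_natCast_atTop_atTop.eventually_gt_atTop (c * C))).exists
  rw [Real.norm_natCast, Real.norm_eq_abs] at hl
  linarith [mul_le_mul_of_nonneg_left (hf l) hc.le]

theorem natCast_isBigO_of_forall_le {f : ℕ → ℝ} {A D : ℕ} (hD : 0 < D)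
    (h : ∀ K l, A + D * K ≤ l → (K + 1 : ℝ) ≤ f l) :
    (fun l : ℕ => (l : ℝ)) =O[Filter.atTop] f := by
  refine Asymptotics.IsBigO.of_bound (A + D) (Filter.eventually_atTop.2 ⟨A, fun l hl => ?_⟩)
  set K := (l - A) / D
  have hK : D * K ≤ l - A := Nat.mul_div_le (l - A) D
  have hK' : l - A < D * (K + 1) := Nat.lt_mul_div_succ (l - A) hD
  have hl' : l ≤ (A + D) * (K + 1) := by
    have : l < A + D * (K + 1) := by omega
    nlinarith [Nat.zero_le (A * K)]
  calc ‖(l : ℝ)‖ = l := Real.norm_natCast l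
    _ ≤ (A + D) * (K + 1 : ℝ) := by exact_mod_cast hl'
    _ ≤ (A + D) * ‖f l‖ := by
        gcongr
        exact (h K l (by omega)).trans (Real.le_norm_self _)

-- `c ++ π c ++ π² c ++ ⋯`: a cycle leading from `g` to `π g` can be repeated after renaming by `π`
def pumpTrace {α : Type*} (c : List α) (π : α ≃ α) : ℕ → List α
  | 0 => []
  | k + 1 => c ++ (pumpTrace c π k).map π

theorem length_pumpTrace {α : Type*} (c : List α) (π : α ≃ α) (k : ℕ) :
    (pumpTrace c π k).length = k * c.length := by
  induction k with
  | zero => simp [pumpTrace]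
  | succ k ih => simp [pumpTrace, ih, add_mul, add_comm]

namespace CacheAlg

variable {P : CacheAlg B}

def IsCached (g : P.Config) (b : B) : Prop := ∃ j, g.2 j = some b

instance (g : P.Config) (b : B) : Decidable (P.IsCached g b) :=
  inferInstanceAs (Decidable (∃ j, g.2 j = some b))

theorem missesFrom_cons (g : P.Config) (b : B) (t : List B) :
    P.missesFrom g (b :: t) = (if P.IsCached g b then 0 else 1) + P.missesFrom (P.upd g b) t :=
  rfl

theorem updTrace_append (g : P.Config) (s t : List B) :
    P.updTrace g (s ++ t) = P.updTrace (P.updTrace g s) t := by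
  induction s generalizing g with
  | nil => rfl
  | cons b s ih => exact ih _

theorem missesFrom_append (g : P.Config) (s t : List B) :
    P.missesFrom g (s ++ t) = P.missesFrom g s + P.missesFrom (P.updTrace g s) t := by
  induction s generalizing g with
  | nil => simp [missesFrom, updTrace]
  | cons b s ih => simp only [List.cons_append, missesFrom_cons, ih, updTrace]; omega

theorem misses_append (s t : List B) :
    P.misses (s ++ t) = P.misses s + P.missesFrom (P.updTrace P.initConfig s) t :=
  missesFrom_append _ s t

theorem missesFrom_le_length (g : P.Config) (t : List B) : P.missesFrom g t ≤ t.length := by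
  induction t generalizing g with
  | nil => exact le_rfl
  | cons b t ih => rw [missesFrom_cons, List.length_cons]; grind

theorem isCached_renameConfig_apply {π : B ≃ B} {g : P.Config} {b : B} :
    P.IsCached (P.renameConfig π g) (π b) ↔ P.IsCached g b := by
  simp [IsCached, renameConfig, renameContent, Option.map_eq_some_iff]

theorem upd_of_isCached {g : P.Config} {b : B} (h : P.IsCached g b) :
    P.upd g b = (P.tr g.1 h.choose, g.2) :=
  dif_pos h

theorem upd_of_not_isCached {g : P.Config} {b : B} (h : ¬ P.IsCached g b) :
    P.upd g b = ((P.evict g.1 b).1, Function.update g.2 (P.evict g.1 b).2 (some b)) :=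
  dif_neg h

theorem upd_renameConfig (hP : P.EvictBlockIndep) (π : B ≃ B) (g : P.Config) (b : B) :
    P.upd (P.renameConfig π g) (π b) = P.renameConfig π (P.upd g b) := by
  by_cases h : P.IsCached g b
  · have h' : P.IsCached (P.renameConfig π g) (π b) := isCached_renameConfig_apply.2 h
    have hpred : (fun j => (P.renameConfig π g).2 j = some (π b)) = (fun j => g.2 j = some b) := by
      funext j
      simp [renameConfig, renameContent, Option.map_eq_some_iff]
    have hchoose : h'.choose = h.choose := by
      unfold IsCached at h h'
      simp only [hpred]
    rw [upd_of_isCached h', upd_of_isCached h, hchoose]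
    rfl
  · have hevict : P.evict (P.renameConfig π g).1 (π b) = P.evict g.1 b := hP g.1 (π b) b
    rw [upd_of_not_isCached (mt isCached_renameConfig_apply.1 h), upd_of_not_isCached h, hevict]
    refine Prod.ext rfl (funext fun j => ?_)
    by_cases hj : j = (P.evict g.1 b).2
    · subst hj; simp [renameConfig, renameContent]
    · simp [renameConfig, renameContent, Function.update_of_ne hj]

theorem updTrace_renameConfig (hP : P.EvictBlockIndep) (π : B ≃ B) (g : P.Config) (t : List B) :
    P.updTrace (P.renameConfig π g) (t.map π) = P.renameConfig π (P.updTrace g t) := by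
  induction t generalizing g with
  | nil => rfl
  | cons b t ih => simp only [List.map_cons, updTrace, upd_renameConfig hP, ih]

theorem missesFrom_renameConfig (hP : P.EvictBlockIndep) (π : B ≃ B) (g : P.Config)
    (t : List B) : P.missesFrom (P.renameConfig π g) (t.map π) = P.missesFrom g t := by
  induction t generalizing g with
  | nil => rfl
  | cons b t ih =>
    simp only [List.map_cons, missesFrom_cons, isCached_renameConfig_apply,
      upd_renameConfig hP, ih]

theorem isCached_upd_self (g : P.Config) (b : B) : P.IsCached (P.upd g b) b := by
  by_cases h : P.IsCached g b
  · rwa [upd_of_isCached h]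
  · rw [upd_of_not_isCached h]
    exact ⟨(P.evict g.1 b).2, by simp⟩

theorem IsCached.of_upd {g : P.Config} {b x : B} (h : P.IsCached (P.upd g x) b) :
    P.IsCached g b ∨ b = x := by
  by_cases hx : P.IsCached g x
  · rw [upd_of_isCached hx] at h
    exact Or.inl h
  · rw [upd_of_not_isCached hx] at h
    obtain ⟨j, hj⟩ := h
    change Function.update g.2 (P.evict g.1 x).2 (some x) j = some b at hj
    by_cases hje : j = (P.evict g.1 x).2
    · subst hje
      simp only [Function.update_self, Option.some.injEq] at hj
      exact Or.inr hj.symm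
    · rw [Function.update_of_ne hje] at hj
      exact Or.inl ⟨j, hj⟩

theorem finite_setOf_isCached (g : P.Config) : {b | P.IsCached g b}.Finite :=
  show (Option.some ⁻¹' Set.range g.2).Finite from
    (Set.finite_range g.2).preimage (Option.some_injective B).injOn

theorem missesFrom_replicate_of_isCached {g : P.Config} {b : B} (h : P.IsCached g b) (k : ℕ) :
    P.missesFrom g (List.replicate k b) = 0 := by
  induction k generalizing g with
  | zero => rfl
  | succ k ih =>
    rw [List.replicate_succ, missesFrom_cons, if_pos h, upd_of_isCached h, zero_add]
    exact ih h

theorem missesFrom_of_nodup_of_not_isCached {g : P.Config} {s : List B} (hs : s.Nodup)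
    (hfresh : ∀ b ∈ s, ¬ P.IsCached g b) : P.missesFrom g s = s.length := by
  induction s generalizing g with
  | nil => rfl
  | cons b s ih =>
    rw [List.nodup_cons] at hs
    have hfresh' : ∀ x ∈ s, ¬ P.IsCached (P.upd g b) x := by
      intro x hx hc
      rcases hc.of_upd with hc | rfl
      · exact hfresh x (List.mem_cons_of_mem b hx) hc
      · exact hs.1 hx
    rw [missesFrom_cons, if_neg (hfresh b List.mem_cons_self), ih hs.2 hfresh', List.length_cons,
      add_comm]

theorem missesFrom_append_replicate {g : P.Config} {s : List B} {b : B} (hs : (s ++ [b]).Nodup)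
    (hfresh : ∀ x ∈ s ++ [b], ¬ P.IsCached g x) (k : ℕ) :
    P.missesFrom g (s ++ [b] ++ List.replicate k b) = s.length + 1 := by
  have hb : P.IsCached (P.updTrace g (s ++ [b])) b := by
    rw [updTrace_append]
    exact isCached_upd_self _ b
  rw [missesFrom_append, missesFrom_of_nodup_of_not_isCached hs hfresh,
    missesFrom_replicate_of_isCached hb, List.length_append, List.length_singleton]

theorem missesFrom_pumpTrace (hP : P.EvictBlockIndep) {g : P.Config}
    {c : List B} {π : B ≃ B} (hcycle : P.updTrace g c = P.renameConfig π g) (k : ℕ) :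
    P.missesFrom g (pumpTrace c π k) = k * P.missesFrom g c := by
  induction k with
  | zero => simp [pumpTrace, missesFrom]
  | succ k ih =>
    rw [pumpTrace, missesFrom_append, hcycle, missesFrom_renameConfig hP, ih, add_mul, one_mul,
      add_comm]

variable {Q : CacheAlg B}

def pairContent (P Q : CacheAlg B) (x : P.Config × Q.Config) : Fin P.n ⊕ Fin Q.n → Option B :=
  Sum.elim x.1.2 x.2.2

abbrev PairShape (P Q : CacheAlg B) : Type :=
  P.S × Q.S × (Fin P.n ⊕ Fin Q.n → Fin P.n ⊕ Fin Q.n → Prop) × (Fin P.n ⊕ Fin Q.n → Prop)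

def pairShape (P Q : CacheAlg B) (x : P.Config × Q.Config) : P.PairShape Q :=
  (x.1.1, x.2.1, fun i j => P.pairContent Q x i = P.pairContent Q x j,
    fun i => P.pairContent Q x i = none)

theorem congruent_of_pairShape_eq [Infinite B] {x y : P.Config × Q.Config}
    (h : P.pairShape Q x = P.pairShape Q y) : P.Congruent Q x y := by
  simp only [pairShape, Prod.mk.injEq] at h
  obtain ⟨hsP, hsQ, hker, hnone⟩ := h
  obtain ⟨π, hπ⟩ := exists_equiv_map_eq_of_ker_eq (fun i j => Iff.of_eq (congrFun₂ hker i j))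
    (fun i => Iff.of_eq (congrFun hnone i))
  exact ⟨π, Prod.ext hsP (funext fun j => hπ (Sum.inl j)),
    Prod.ext hsQ (funext fun j => hπ (Sum.inr j))⟩

theorem exists_cycle_missesFrom_ne [Infinite B] [Finite P.S] [Finite Q.S]
    (h : ∀ m : ℕ, ∃ t : List B, (m : ℤ) < |(P.misses t : ℤ) - (Q.misses t : ℤ)|) :
    ∃ (u c : List B) (π : B ≃ B),
      P.updTrace (P.updTrace P.initConfig u) c = P.renameConfig π (P.updTrace P.initConfig u) ∧
      Q.updTrace (Q.updTrace Q.initConfig u) c = Q.renameConfig π (Q.updTrace Q.initConfig u) ∧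
      P.missesFrom (P.updTrace P.initConfig u) c ≠ Q.missesFrom (Q.updTrace Q.initConfig u) c := by
  obtain ⟨t, ht⟩ := h (Nat.card (P.PairShape Q))
  set f : ℕ → ℤ := fun k => P.misses (t.take k) - Q.misses (t.take k) with hf
  have hstep : ∀ k, |f (k + 1) - f k| ≤ 1 := by
    intro k
    have hP := P.missesFrom_le_length (P.updTrace P.initConfig (t.take k)) ((t.drop k).take 1)
    have hQ := Q.missesFrom_le_length (Q.updTrace Q.initConfig (t.take k)) ((t.drop k).take 1)
    have hlen : ((t.drop k).take 1).length ≤ 1 := by simp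
    simp only [hf, List.take_add, misses_append]
    push_cast
    rw [abs_le]
    omega
  have hfar : Nat.card (P.PairShape Q) ≤ (f t.length).natAbs := by
    rw [Int.abs_eq_natAbs] at ht
    simp only [hf, List.take_length]
    omega
  obtain ⟨i, j, hij, -, hshape, hne⟩ := exists_lt_eq_ne_of_card_le_natAbs
    (fun k => P.pairShape Q
      (P.updTrace P.initConfig (t.take k), Q.updTrace Q.initConfig (t.take k)))
    (by simp [hf, misses, missesFrom]) hstep hfar
  obtain ⟨π, hπP, hπQ⟩ := congruent_of_pairShape_eq hshape
  have htake : t.take j = t.take i ++ (t.drop i).take (j - i) := by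
    rw [← List.take_add, Nat.add_sub_cancel' hij.le]
  refine ⟨t.take i, (t.drop i).take (j - i), π, ?_, ?_, fun heq => hne ?_⟩
  · rw [← updTrace_append, ← htake]
    exact hπP.symm
  · rw [← updTrace_append, ← htake]
    exact hπQ.symm
  · simp only [hf, htake, misses_append, heq]
    push_cast
    ring

end CacheAlg

theorem exists_length_eq_and_missesFrom_eq [Infinite B] (P Q : CacheAlg B) (gP : P.Config)
    (gQ : Q.Config) (r k : ℕ) :
    ∃ s : List B, s.length = r + 1 + k ∧ P.missesFrom gP s = r + 1 ∧ Q.missesFrom gQ s = r + 1 := by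
  have hcached : {b | P.IsCached gP b ∨ Q.IsCached gQ b}.Finite :=
    (P.finite_setOf_isCached gP).union (Q.finite_setOf_isCached gQ)
  obtain ⟨F, hFfresh, hFcard⟩ := hcached.infinite_compl.exists_subset_card_eq (r + 1)
  have hlen : F.toList.length = r + 1 := by rw [Finset.length_toList, hFcard]
  obtain ⟨s, b, hsb⟩ : ∃ s b, F.toList = s ++ [b] := by
    rcases F.toList.eq_nil_or_concat with hnil | ⟨s, b, hsb⟩
    · simp [hnil] at hlen
    · exact ⟨s, b, by rw [hsb, List.concat_eq_append]⟩
  have hnodup : (s ++ [b]).Nodup := hsb ▸ F.nodup_toList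
  have hfresh : ∀ x ∈ s ++ [b], ¬ P.IsCached gP x ∧ ¬ Q.IsCached gQ x := by
    intro x hx
    rw [← hsb, Finset.mem_toList] at hx
    simpa only [Set.mem_compl_iff, Set.mem_ofPred_eq, not_or] using hFfresh hx
  have hslen : s.length = r := by simpa [hsb] using hlen
  refine ⟨s ++ [b] ++ List.replicate k b, by simp [hslen]; omega, ?_, ?_⟩
  · rw [P.missesFrom_append_replicate hnodup (fun x hx => (hfresh x hx).1), hslen]
  · rw [Q.missesFrom_append_replicate hnodup (fun x hx => (hfresh x hx).2), hslen]

theorem exists_length_eq_and_misses_eq_of_cycle [Infinite B] {P Q : CacheAlg B}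
    (hP : P.EvictBlockIndep) (hQ : Q.EvictBlockIndep) {u c : List B} {π : B ≃ B}
    (hcP : P.updTrace (P.updTrace P.initConfig u) c = P.renameConfig π (P.updTrace P.initConfig u))
    (hcQ : Q.updTrace (Q.updTrace Q.initConfig u) c = Q.renameConfig π (Q.updTrace Q.initConfig u))
    (a r k : ℕ) :
    ∃ t : List B, t.length = u.length + a * c.length + (r + 1 + k) ∧
      P.misses t = P.misses u + a * P.missesFrom (P.updTrace P.initConfig u) c + (r + 1) ∧
      Q.misses t = Q.misses u + a * Q.missesFrom (Q.updTrace Q.initConfig u) c + (r + 1) := by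
  set v := u ++ pumpTrace c π a
  obtain ⟨s, hs, hsP, hsQ⟩ := exists_length_eq_and_missesFrom_eq P Q
    (P.updTrace P.initConfig v) (Q.updTrace Q.initConfig v) r k
  refine ⟨v ++ s, ?_, ?_, ?_⟩
  · simp only [v, List.length_append, length_pumpTrace, hs]
  · rw [CacheAlg.misses_append, hsP, CacheAlg.misses_append, P.missesFrom_pumpTrace hP hcP]
  · rw [CacheAlg.misses_append, hsQ, CacheAlg.misses_append, Q.missesFrom_pumpTrace hQ hcQ]

section LeakRatio

variable {P Q : CacheAlg B}

theorem div_le_leakRatio {T : Finset (List B)} {l : ℕ} (hT : T.Nonempty)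
    (hlen : ∀ t ∈ T, t.length = l) :
    ((T.image P.misses).card : ℝ) / (T.image Q.misses).card ≤ leakRatio P Q l := by
  refine le_csSup ⟨l + 1, ?_⟩ ⟨T, hT, hlen, rfl⟩
  rintro _ ⟨T', hT', hlen', rfl⟩
  have hQ : (1 : ℝ) ≤ (T'.image Q.misses).card := by exact_mod_cast (hT'.image _).card_pos
  have hsub : T'.image P.misses ⊆ Finset.range (l + 1) := by
    intro x hx
    obtain ⟨t, ht, rfl⟩ := Finset.mem_image.1 hx
    exact Finset.mem_range.2
      (Nat.lt_succ_of_le ((P.missesFrom_le_length _ t).trans (hlen' t ht).le))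
  calc ((T'.image P.misses).card : ℝ) / (T'.image Q.misses).card
      ≤ (T'.image P.misses).card := div_le_self (by positivity) hQ
    _ ≤ (Finset.range (l + 1)).card := by exact_mod_cast Finset.card_le_card hsub
    _ = l + 1 := by simp

theorem le_leakRatio_of_injective {K l n : ℕ} (tr : Fin (K + 1) → List B)
    (hlen : ∀ i, (tr i).length = l) (hP : Function.Injective (P.misses ∘ tr))
    (hQ : ∀ i, Q.misses (tr i) = n) : (K + 1 : ℝ) ≤ leakRatio P Q l := by
  set T := Finset.univ.image tr
  have hcardP : (T.image P.misses).card = K + 1 := by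
    rw [Finset.image_image, Finset.card_image_of_injective _ hP, Finset.card_univ,
      Fintype.card_fin]
  have hcardQ : (T.image Q.misses).card = 1 := by
    rw [Finset.image_image, Finset.image_congr (f := Q.misses ∘ tr) (g := fun _ => n)
      fun i _ => hQ i, Finset.image_const Finset.univ_nonempty, Finset.card_singleton]
  calc (K + 1 : ℝ) = (T.image P.misses).card / (T.image Q.misses).card := by
        rw [hcardP, hcardQ]
        push_cast
        ring
    _ ≤ leakRatio P Q l := div_le_leakRatio (Finset.univ_nonempty.image _) (by simp [T, hlen])

theorem leakRatio_le_of_abs_sub_le {m : ℕ}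
    (h : ∀ t : List B, |(P.misses t : ℤ) - (Q.misses t : ℤ)| ≤ m) (l : ℕ) :
    leakRatio P Q l ≤ 2 * m + 1 := by
  refine Real.sSup_le ?_ (by positivity)
  rintro _ ⟨T, hT, -, rfl⟩
  have hQ : (0 : ℝ) < (T.image Q.misses).card := by exact_mod_cast (hT.image _).card_pos
  rw [div_le_iff₀ hQ, mul_comm]
  exact_mod_cast card_image_le_card_image_mul fun t _ => h t

theorem leakRatio_nonneg (P Q : CacheAlg B) (l : ℕ) : 0 ≤ leakRatio P Q l :=
  Real.sSup_nonneg (by rintro _ ⟨T, -, -, rfl⟩; positivity)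

theorem abs_leakRatio_le_of_abs_sub_le {m : ℕ}
    (h : ∀ t : List B, |(P.misses t : ℤ) - (Q.misses t : ℤ)| ≤ m) (l : ℕ) :
    |leakRatio P Q l| ≤ 2 * m + 1 := by
  rw [abs_of_nonneg (leakRatio_nonneg P Q l)]
  exact leakRatio_le_of_abs_sub_le h l

theorem le_leakRatio_of_cycle [Infinite B] (hP : P.EvictBlockIndep) (hQ : Q.EvictBlockIndep)
    {u c : List B} {π : B ≃ B}
    (hcP : P.updTrace (P.updTrace P.initConfig u) c = P.renameConfig π (P.updTrace P.initConfig u))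
    (hcQ : Q.updTrace (Q.updTrace Q.initConfig u) c = Q.renameConfig π (Q.updTrace Q.initConfig u))
    (hne : P.missesFrom (P.updTrace P.initConfig u) c ≠ Q.missesFrom (Q.updTrace Q.initConfig u) c)
    (K l : ℕ) (hl : u.length + c.length + 1 + 2 * c.length * K ≤ l) :
    (K + 1 : ℝ) ≤ leakRatio P Q l := by
  set p := P.missesFrom (P.updTrace P.initConfig u) c
  set q := Q.missesFrom (Q.updTrace Q.initConfig u) c
  have hq : q ≤ c.length := Q.missesFrom_le_length _ c
  -- run the cycle `i + 1` times, then let fresh blocks make up `q` misses per skipped run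
  have htrace : ∀ i : Fin (K + 1), ∃ t : List B, t.length = l ∧
      P.misses t = P.misses u + (i + 1) * p + ((K - i) * q + 1) ∧
      Q.misses t = Q.misses u + (i + 1) * q + ((K - i) * q + 1) := by
    intro i
    have hi := i.is_le
    have hlen : (i + 1) * c.length + (K - i) * q ≤ c.length + 2 * c.length * K := by
      have h1 : (i + 1) * c.length ≤ (K + 1) * c.length := Nat.mul_le_mul_right _ (by omega)
      have h2 : (K - i) * q ≤ K * c.length := Nat.mul_le_mul (Nat.sub_le K i) hq
      nlinarith
    obtain ⟨t, ht, htP, htQ⟩ := exists_length_eq_and_misses_eq_of_cycle hP hQ hcP hcQ (i + 1)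
      ((K - i) * q) (l - (u.length + (i + 1) * c.length + ((K - i) * q + 1)))
    exact ⟨t, by omega, htP, htQ⟩
  choose tr htr using htrace
  have hPinj : Function.Injective (P.misses ∘ tr) := by
    intro i j hij
    simp only [Function.comp_apply, (htr i).2.1, (htr j).2.1] at hij
    have hzero : ((i : ℤ) - j) * ((p : ℤ) - q) = 0 := by
      zify [i.is_le, j.is_le] at hij
      linear_combination hij
    have hpq : (p : ℤ) - q ≠ 0 := sub_ne_zero.2 (by exact_mod_cast hne)
    exact Fin.ext (by exact_mod_cast sub_eq_zero.1 ((mul_eq_zero.1 hzero).resolve_right hpq))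
  refine le_leakRatio_of_injective (n := Q.misses u + (K + 1) * q + 1) tr (fun i => (htr i).1)
    hPinj fun i => ?_
  rw [(htr i).2.2]
  have := i.is_le
  zify [this]
  ring

theorem isBigO_leakRatio_of_unbounded [Infinite B] [Finite P.S] [Finite Q.S]
    (hP : P.EvictBlockIndep) (hQ : Q.EvictBlockIndep)
    (h : ∀ m : ℕ, ∃ t : List B, (m : ℤ) < |(P.misses t : ℤ) - (Q.misses t : ℤ)|) :
    (fun l : ℕ => (l : ℝ)) =O[Filter.atTop] leakRatio P Q := by
  obtain ⟨u, c, π, hcP, hcQ, hne⟩ := CacheAlg.exists_cycle_missesFrom_ne h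
  have hc : 0 < c.length := List.length_pos_iff.2 (by rintro rfl; exact hne rfl)
  exact natCast_isBigO_of_forall_le (by omega : 0 < 2 * c.length)
    (le_leakRatio_of_cycle hP hQ hcP hcQ hne)

end LeakRatio

theorem leakRatio_linear_iff_unbounded_diff (P Q : CacheAlg B) [Infinite B]
    [Finite P.S] [Finite Q.S]
    (hP : P.EvictBlockIndep) (hQ : Q.EvictBlockIndep) :
    (((fun l : ℕ => (l : ℝ)) =O[Filter.atTop] leakRatio P Q) ∧
     ((fun l : ℕ => (l : ℝ)) =O[Filter.atTop] leakRatio Q P)) ↔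
    (∀ m : ℕ, ∃ t : List B, (m : ℤ) < |(P.misses t : ℤ) - (Q.misses t : ℤ)|) := by
  constructor
  · rintro ⟨hPQ, -⟩
    by_contra! hbounded
    obtain ⟨m, hm⟩ := hbounded
    exact not_natCast_isBigO_of_abs_le (abs_leakRatio_le_of_abs_sub_le hm) hPQ
  · intro h
    refine ⟨isBigO_leakRatio_of_unbounded hP hQ h, isBigO_leakRatio_of_unbounded hQ hP fun m => ?_⟩
    simpa only [abs_sub_comm] using h m
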